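/- Order the alphabet {a, b} by a < b and order words of equal length lexicographically. Let Ψ be a cubeless word over {a, b} whose last letter is b, and for each k ≥ 0 let Θ_k be the word Ψ followed by the first k letters of the periodic infinite word aabaabaab... (period aab). Let Q_k denote the number of cubeless words of length |Ψ| + k that are greater than or equal to Θ_k in the lexicographic order. Then Q_k = Q_{k-1} + Q_{k-2} for all k ≥ 2. -/

import Mathlib

/-!
Split the words counted by `Q (k + 2)` by their last two letters. If these differ, the last
letter is the flip of the one before it, so deleting it is injective and lands in the words
counted by `Q (k + 1)`. If they agree, cubelessness forces both to be the flip of the third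
last letter, so deleting them is injective and lands in the words counted by `Q k`.
Conversely, appending such letters preserves cubelessness, and it preserves lying above the
threshold because the threshold word never continues with `bb`, and continues with `aa`
whenever it currently ends in `b` (this is where `Ψ` ending in `b` is used).
-/

namespace List

variable {α : Type*}

def Cubeless (l : List α) : Prop := ∀ c, ¬ [c, c, c] <:+: l

theorem Cubeless.infix {l l' : List α} (h : Cubeless l) (h' : l' <:+: l) : Cubeless l' :=
  fun c hc => h c (hc.trans h')

theorem append_singleton_suffix_append_singleton_iff {l₁ l₂ : List α} {a b : α} :
    l₁ ++ [a] <:+ l₂ ++ [b] ↔ a = b ∧ l₁ <:+ l₂ := by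
  rw [suffix_append_inj_of_length_eq (s₁ := [a]) (s₂ := [b]) rfl, singleton_inj, and_comm]

theorem cubeless_append_singleton_iff {l : List α} {x : α} :
    Cubeless (l ++ [x]) ↔ Cubeless l ∧ ¬ [x, x] <:+ l := by
  have hsuffix (c : α) : [c, c, c] <:+ l ++ [x] ↔ c = x ∧ [c, c] <:+ l :=
    append_singleton_suffix_append_singleton_iff (l₁ := [c, c])
  simp only [Cubeless, infix_concat_iff, hsuffix, not_or, forall_and, not_and, forall_eq]
  exact and_comm

theorem Cubeless.append_not {l : List Bool} {x : Bool} (h : Cubeless (l ++ [x])) :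
    Cubeless (l ++ [x, !x]) := by
  have hsuffix : ¬ [!x, !x] <:+ l ++ [x] := fun hs => by
    simpa using (append_singleton_suffix_append_singleton_iff (l₁ := [!x])).1 hs
  simpa using cubeless_append_singleton_iff.2 ⟨h, hsuffix⟩

theorem Cubeless.append_not_not {l : List Bool} {x : Bool} (h : Cubeless (l ++ [x])) :
    Cubeless (l ++ [x, !x, !x]) := by
  have hsuffix : ¬ [!x, !x] <:+ l ++ [x, !x] := fun hs => by
    simpa using (append_singleton_suffix_append_singleton_iff (l₁ := [!x]) (l₂ := l ++ [x])).1
      (by simpa using hs)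
  simpa using cubeless_append_singleton_iff.2 ⟨h.append_not, hsuffix⟩

theorem Cubeless.eq_not_of_append {l : List Bool} {p x : Bool} (h : Cubeless (l ++ [p, x, x])) :
    x = !p := by
  by_contra hx
  obtain rfl : x = p := by simpa using hx
  exact h x (suffix_append _ _).isInfix

theorem Lex.append_iff_of_length_eq {r : α → α → Prop} :
    ∀ {s t u v : List α}, s.length = t.length →
      (Lex r (s ++ u) (t ++ v) ↔ Lex r s t ∨ s = t ∧ Lex r u v)
  | [], [], _, _, _ => by simp
  | _ :: _, [], _, _, h | [], _ :: _, _, _, h => by simp at h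
  | a :: s, b :: t, u, v, h => by
    simp only [cons_append, cons_lex_cons_iff, cons.injEq,
      append_iff_of_length_eq (Nat.succ.inj h)]
    tauto

theorem append_le_append_iff_of_length_eq [LinearOrder α] {s t u v : List α}
    (h : s.length = t.length) : s ++ u ≤ t ++ v ↔ s < t ∨ s = t ∧ u ≤ v := by
  have heq : s ++ u = t ++ v ↔ s = t ∧ u = v :=
    ⟨fun he => append_inj he h, fun ⟨hs, hu⟩ => hs ▸ hu ▸ rfl⟩
  simp only [le_iff_eq_or_lt, ← lex_lt, Lex.append_iff_of_length_eq h, heq]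
  tauto

end List

open List

section CubelessAbove

variable {α : Type*} [LinearOrder α]

def cubelessAbove (t : List α) : Set (List α) :=
  {v | v.length = t.length ∧ Cubeless v ∧ t ≤ v}

theorem cubelessAbove_finite [Finite α] (t : List α) : (cubelessAbove t).Finite :=
  (List.finite_length_eq α t.length).subset fun _ hv => hv.1

theorem mem_cubelessAbove_of_append {t w x y : List α} (hv : w ++ x ∈ cubelessAbove (t ++ y))
    (hw : w.length = t.length) : w ∈ cubelessAbove t := by
  obtain ⟨-, hcube, hle⟩ := hv
  refine ⟨hw, hcube.infix infix_append_left, ?_⟩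
  rcases (append_le_append_iff_of_length_eq hw.symm).1 hle with hlt | ⟨rfl, -⟩
  exacts [hlt.le, le_rfl]

end CubelessAbove

-- The default letter is irrelevant: only nonempty words get extended.
def extendFlip (w : List Bool) : List Bool := w ++ [!w.getLastD false]

def extendFlipFlip (w : List Bool) : List Bool := w ++ [!w.getLastD false, !w.getLastD false]

theorem extendFlip_injective : Function.Injective extendFlip :=
  Function.LeftInverse.injective (g := dropLast) fun _ => dropLast_concat

theorem extendFlipFlip_injective : Function.Injective extendFlipFlip :=
  Function.LeftInverse.injective (g := dropLast ∘ dropLast) fun w => by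
    simp [extendFlipFlip]

theorem disjoint_range_extendFlip_extendFlipFlip :
    Disjoint (Set.range extendFlip) (Set.range extendFlipFlip) := by
  rw [Set.disjoint_range_iff]
  intro w u h
  set c := !u.getLastD false
  rw [extendFlip, extendFlipFlip, show u ++ [c, c] = u ++ [c] ++ [c] by simp,
    append_singleton_inj] at h
  obtain ⟨rfl, h⟩ := h
  simp at h

theorem extendFlip_mem_cubelessAbove {s w : List Bool} {a b : Bool} (hab : [a, b] ≤ [a, !a])
    (hw : w ∈ cubelessAbove (s ++ [a])) : extendFlip w ∈ cubelessAbove (s ++ [a, b]) := by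
  obtain ⟨hlen, hcube, hle⟩ := hw
  obtain ⟨w, x, rfl⟩ : ∃ w' x, w = w' ++ [x] :=
    (eq_nil_or_concat' _).resolve_left (ne_nil_of_length_pos (by simp [hlen]))
  have hw : w.length = s.length := by simpa using hlen
  have hpair : ∀ a b x : Bool, [a] ≤ [x] → [a, b] ≤ [a, !a] → [a, b] ≤ [x, !x] := by decide
  rw [extendFlip, getLastD_concat, append_assoc, singleton_append]
  refine ⟨by simp [hw], hcube.append_not, ?_⟩
  rw [append_le_append_iff_of_length_eq hw.symm] at hle ⊢
  exact hle.imp_right fun ⟨hsw, hax⟩ => ⟨hsw, hpair a b x hax hab⟩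

theorem extendFlipFlip_mem_cubelessAbove {t u : List Bool} {q a b : Bool}
    (hq : [a, b] ≤ [!q, !q]) (hu : u ∈ cubelessAbove (t ++ [q])) :
    extendFlipFlip u ∈ cubelessAbove (t ++ [q, a, b]) := by
  obtain ⟨hlen, hcube, hle⟩ := hu
  obtain ⟨u, p, rfl⟩ : ∃ u' p, u = u' ++ [p] :=
    (eq_nil_or_concat' _).resolve_left (ne_nil_of_length_pos (by simp [hlen]))
  have hu : u.length = t.length := by simpa using hlen
  rw [extendFlipFlip, getLastD_concat]
  refine ⟨by simp [hu], by simpa using hcube.append_not_not, ?_⟩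
  rw [show t ++ [q, a, b] = t ++ [q] ++ [a, b] by simp,
    append_le_append_iff_of_length_eq hlen.symm]
  rcases hle.lt_or_eq with hlt | heq
  · exact .inl hlt
  · obtain ⟨rfl, rfl⟩ := append_singleton_inj.1 heq
    exact .inr ⟨rfl, hq⟩

theorem cubelessAbove_append_triple_subset {t : List Bool} {q a b : Bool} :
    cubelessAbove (t ++ [q, a, b]) ⊆
      extendFlip '' cubelessAbove (t ++ [q, a]) ∪ extendFlipFlip '' cubelessAbove (t ++ [q]) := by
  intro v hv
  obtain ⟨u, p, x, y, rfl, hu⟩ : ∃ u p x y, v = u ++ [p, x, y] ∧ u.length = t.length := by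
    obtain ⟨p, x, y, h⟩ := length_eq_three.1 (by simp [hv.1] : (v.drop t.length).length = 3)
    exact ⟨v.take t.length, p, x, y, by rw [← h, take_append_drop], by simp [hv.1]⟩
  by_cases hy : y = !x
  · refine .inl ⟨u ++ [p, x], mem_cubelessAbove_of_append (x := [y]) (y := [b]) ?_ (by simp [hu]),
      by simp [extendFlip, hy]⟩
    simpa using hv
  · obtain rfl : y = x := Bool.ne_not.1 hy
    have hx : y = !p := hv.2.1.eq_not_of_append
    refine .inr ⟨u ++ [p], mem_cubelessAbove_of_append (x := [y, y]) (y := [a, b]) ?_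
      (by simp [hu]), by simp [extendFlipFlip, hx]⟩
    simpa using hv

theorem ncard_cubelessAbove_append_triple {t : List Bool} {q a b : Bool}
    (hab : [a, b] ≤ [a, !a]) (hq : [a, b] ≤ [!q, !q]) :
    (cubelessAbove (t ++ [q, a, b])).ncard =
      (cubelessAbove (t ++ [q, a])).ncard + (cubelessAbove (t ++ [q])).ncard := by
  have hsplit : cubelessAbove (t ++ [q, a, b]) =
      extendFlip '' cubelessAbove (t ++ [q, a]) ∪ extendFlipFlip '' cubelessAbove (t ++ [q]) := by
    refine cubelessAbove_append_triple_subset.antisymm (Set.union_subset ?_ ?_)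
    · rintro _ ⟨w, hw, rfl⟩
      simpa using extendFlip_mem_cubelessAbove (s := t ++ [q]) hab (by simpa using hw)
    · rintro _ ⟨u, hu, rfl⟩
      exact extendFlipFlip_mem_cubelessAbove hq hu
  have hdisj := disjoint_range_extendFlip_extendFlipFlip.mono
    (Set.image_subset_range _ (cubelessAbove (t ++ [q, a])))
    (Set.image_subset_range _ (cubelessAbove (t ++ [q])))
  rw [hsplit, Set.ncard_union_eq hdisj ((cubelessAbove_finite _).image _)
    ((cubelessAbove_finite _).image _), Set.ncard_image_of_injective _ extendFlip_injective,
    Set.ncard_image_of_injective _ extendFlipFlip_injective]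

def aabWord (k : ℕ) : List Bool := (range k).map fun i => decide (i % 3 = 2)

theorem aabWord_succ (k : ℕ) : aabWord (k + 1) = aabWord k ++ [decide (k % 3 = 2)] := by
  simp [aabWord, range_succ]

theorem exists_append_aabWord_eq_append_singleton {Ψ : List Bool}
    (hlast : Ψ.getLast? = some true) (k : ℕ) :
    ∃ t q, Ψ ++ aabWord k = t ++ [q] ∧ (q = true → k % 3 = 0) := by
  cases k with
  | zero =>
    obtain ⟨t, rfl⟩ := getLast?_eq_some_iff.1 hlast
    exact ⟨t, true, by simp [aabWord], fun _ => rfl⟩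
  | succ k =>
    exact ⟨Ψ ++ aabWord k, _, by rw [aabWord_succ, append_assoc], fun h => by simp at h; omega⟩

theorem aab_pair_le (k : ℕ) :
    [decide (k % 3 = 2), decide ((k + 1) % 3 = 2)] ≤ [decide (k % 3 = 2), !decide (k % 3 = 2)] := by
  rcases (by omega : k % 3 = 0 ∨ k % 3 = 1 ∨ k % 3 = 2) with h | h | h <;>
    simp +decide [h, Nat.add_mod]

theorem aab_pair_le_not_not {k : ℕ} {q : Bool} (hq : q = true → k % 3 = 0) :
    [decide (k % 3 = 2), decide ((k + 1) % 3 = 2)] ≤ [!q, !q] := by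
  rcases (by omega : k % 3 = 0 ∨ k % 3 = 1 ∨ k % 3 = 2) with h | h | h <;>
    cases q <;> simp_all +decide [Nat.add_mod]

theorem cubeless_lex_count_fib_recurrence_general (Ψ : List Bool)
    (hlast : Ψ.getLast? = some true)
    (Θ : ℕ → List Bool)
    (hΘ : ∀ k : ℕ, Θ k = Ψ ++ (List.range k).map (fun i => decide (i % 3 = 2)))
    (Q : ℕ → ℕ)
    (hQ : ∀ k : ℕ, Q k = Nat.card {v : List Bool //
        v.length = Ψ.length + k ∧ (∀ c : Bool, ¬ [c, c, c] <:+: v) ∧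
        (Θ k = v ∨ List.Lex (· < ·) (Θ k) v)}) :
    ∀ k : ℕ, Q (k + 2) = Q (k + 1) + Q k := by
  have hΘ' (k : ℕ) : Θ k = Ψ ++ aabWord k := hΘ k
  have hQ' (k : ℕ) : Q k = (cubelessAbove (Θ k)).ncard := by
    rw [hQ, ← Nat.card_coe_set_eq]
    refine Nat.card_congr (Equiv.subtypeEquivRight fun v => ?_)
    simp [cubelessAbove, Cubeless, hΘ, le_iff_eq_or_lt]
  intro k
  obtain ⟨t, q, hΘk, hq⟩ := exists_append_aabWord_eq_append_singleton hlast k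
  rw [hQ', hQ', hQ', hΘ', hΘ', hΘ', aabWord_succ, aabWord_succ, ← append_assoc, ← append_assoc, hΘk]
  simpa using ncard_cubelessAbove_append_triple (t := t) (aab_pair_le k) (aab_pair_le_not_not hq)

/-- Order the alphabet `{a, b}` as `Bool` with `a = false < b = true`, and compare
words of equal length lexicographically. Let `Ψ` be a cubeless word ending in `b`,
and let `Θ k` be `Ψ` followed by the first `k` letters of the periodic infinite
word `aabaabaab…`. If `Q k` is the number of cubeless words of length `Ψ.length + k`
that are `≥ Θ k` in the lexicographic order, then `Q` satisfies the Fibonacci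
recurrence `Q (k+2) = Q (k+1) + Q k`. -/
theorem cubeless_lex_count_fib_recurrence (Ψ : List Bool)
    (hcube : ∀ c : Bool, ¬ [c, c, c] <:+: Ψ) (hlast : Ψ.getLast? = some true)
    (Θ : ℕ → List Bool)
    (hΘ : ∀ k : ℕ, Θ k = Ψ ++ (List.range k).map (fun i => decide (i % 3 = 2)))
    (Q : ℕ → ℕ)
    (hQ : ∀ k : ℕ, Q k = Nat.card {v : List Bool //
        v.length = Ψ.length + k ∧ (∀ c : Bool, ¬ [c, c, c] <:+: v) ∧
        (Θ k = v ∨ List.Lex (· < ·) (Θ k) v)}) :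
    ∀ k : ℕ, Q (k + 2) = Q (k + 1) + Q k :=
  cubeless_lex_count_fib_recurrence_general Ψ hlast Θ hΘ Q hQ
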